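/- Let φ: ℝ → ℝ with φ(x) = 1 + cos(2πx) for |x| ≤ 1/2 and φ(x) = 0 otherwise, and for τ > 0 let ψ_τ: ℝ → ℝ be defined by ψ_τ(x) = (1+τ)^{−1/2}[4π²(1+τ)(φ*φ)(x/√(1+τ)) + (φ*φ)''(x/√(1+τ))], where * denotes convolution. Then ψ_τ(0) = 2π²(2 + 3τ)/√(1+τ); in particular ψ_τ(0) > 0. -/

import Mathlib

open scoped FourierTransform Real

/-- The raised-cosine bump `φ(x) = 1 + cos(2πx)` on `[-1/2, 1/2]`, zero elsewhere. -/
noncomputable def raisedCos : ℝ → ℝ :=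
  fun x => if |x| ≤ 1/2 then 1 + Real.cos (2 * π * x) else 0

/-- The autocorrelation `φ * φ` (convolution over ℝ with respect to Lebesgue measure). -/
noncomputable def raisedCosConv : ℝ → ℝ :=
  MeasureTheory.convolution raisedCos raisedCos (ContinuousLinearMap.lsmul ℝ ℝ)
    MeasureTheory.volume

/-- The univariate admissible function
`ψ_τ(x) = (1+τ)^{−1/2} [4π²(1+τ)(φ*φ)(x/√(1+τ)) + (φ*φ)''(x/√(1+τ))]`. -/
noncomputable def psiAdm (τ : ℝ) : ℝ → ℝ := fun x =>
  (Real.sqrt (1 + τ))⁻¹ *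
    (4 * π ^ 2 * (1 + τ) * raisedCosConv (x / Real.sqrt (1 + τ)) +
      deriv (deriv raisedCosConv) (x / Real.sqrt (1 + τ)))

/-!
Since `φ` is even, `(φ * φ)(0) = ∫ φ² = 3/2`. Since `φ` is `C¹` with compact support (it vanishes
to first order at `±1/2`), `(φ * φ)'' = φ' * φ'`, and `φ'` is odd, so `(φ * φ)''(0) = -∫ φ'² = -2π²`.
Hence `ψ_τ(0) = (1 + τ)^{-1/2} (4π²(1 + τ) · 3/2 - 2π²) = 2π²(2 + 3τ) / √(1 + τ)`.
-/

open scoped Topology Convolution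
open MeasureTheory Set Filter Asymptotics ContinuousLinearMap Real

section Indicator

variable {𝕜 F : Type*} [NontriviallyNormedField 𝕜] [NormedAddCommGroup F] [NormedSpace 𝕜 F]
  {s : Set 𝕜} {g g' : 𝕜 → F} {x : 𝕜}

theorem HasDerivAt.indicator_of_eq_zero (hg : HasDerivAt g 0 x) (hx : g x = 0) :
    HasDerivAt (s.indicator g) 0 x := by
  have hsx : s.indicator g x = 0 := indicator_apply_eq_zero.2 fun _ => hx
  rw [hasDerivAt_iff_isLittleO] at hg ⊢
  simp only [hx, hsx, smul_zero, sub_zero] at hg ⊢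
  exact (isBigO_of_le _ fun _ => norm_indicator_le_norm_self g _).trans_isLittleO hg

theorem HasDerivAt.indicator (hg : HasDerivAt g (g' x) x)
    (hs : x ∈ frontier s → g x = 0 ∧ g' x = 0) :
    HasDerivAt (s.indicator g) (s.indicator g' x) x := by
  by_cases hx : x ∈ frontier s
  · obtain ⟨hgx, hg'x⟩ := hs hx
    rw [indicator_apply_eq_zero.2 fun _ => hg'x]
    exact (hg'x ▸ hg).indicator_of_eq_zero hgx
  by_cases hxs : x ∈ interior s
  · rw [indicator_of_mem (interior_subset hxs)]
    refine hg.congr_of_eventuallyEq ?_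
    filter_upwards [mem_interior_iff_mem_nhds.1 hxs] with y hy using indicator_of_mem hy g
  · have hxs' : x ∉ closure s := fun h => hx ⟨h, hxs⟩
    rw [indicator_of_notMem fun h => hxs' (subset_closure h)]
    refine (hasDerivAt_const x 0).congr_of_eventuallyEq ?_
    have hsc : sᶜ ∈ 𝓝 x := mem_interior_iff_mem_nhds.1 (by rwa [interior_compl])
    filter_upwards [hsc] with y hy using indicator_of_notMem hy g

end Indicator

theorem Function.Even.deriv {𝕜 F : Type*} [NontriviallyNormedField 𝕜] [NormedAddCommGroup F]
    [NormedSpace 𝕜 F] {f : 𝕜 → F} (hf : f.Even) : (deriv f).Odd := fun x => by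
  conv_lhs => rw [show f = fun y => f (-y) from funext fun y => (hf y).symm]
  rw [deriv_comp_neg, neg_neg]

section Convolution

variable {𝕜 E E' F : Type*} [RCLike 𝕜] [NormedAddCommGroup E] [NormedAddCommGroup E']
  [NormedAddCommGroup F] [NormedSpace 𝕜 E] [NormedSpace 𝕜 E'] [NormedSpace ℝ F] [NormedSpace 𝕜 F]
  (L : E →L[𝕜] E' →L[𝕜] F) {μ : Measure 𝕜} [μ.IsAddLeftInvariant] [SFinite μ]
  [μ.IsNegInvariant] [IsLocallyFiniteMeasure μ] {f : 𝕜 → E} {g : 𝕜 → E'}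

theorem HasCompactSupport.deriv_deriv_convolution (hcf : HasCompactSupport f)
    (hf : ContDiff 𝕜 1 f) (hcg : HasCompactSupport g) (hg : ContDiff 𝕜 1 g) :
    deriv (deriv (f ⋆[L, μ] g)) = deriv f ⋆[L, μ] deriv g := by
  have hfi : LocallyIntegrable f μ := hf.continuous.locallyIntegrable
  have hg'i : LocallyIntegrable (deriv g) μ := (hg.continuous_deriv le_rfl).locallyIntegrable
  have hfg : deriv (f ⋆[L, μ] g) = f ⋆[L, μ] deriv g := funext fun x =>
    (hcg.hasDerivAt_convolution_right L hfi hg x).deriv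
  rw [hfg]
  exact funext fun x => (hcf.hasDerivAt_convolution_left L hf hg'i x).deriv

end Convolution

section ConvolutionAtZero

variable {G : Type*} [AddGroup G] [MeasurableSpace G] {μ : Measure G} {f : G → ℝ}

theorem Function.Even.convolution_self_zero (hf : f.Even) :
    (f ⋆[lsmul ℝ ℝ, μ] f) 0 = ∫ t, f t ^ 2 ∂μ := by
  simp only [convolution_lsmul, zero_sub, hf _, smul_eq_mul, sq]

theorem Function.Odd.convolution_self_zero (hf : f.Odd) :
    (f ⋆[lsmul ℝ ℝ, μ] f) 0 = -∫ t, f t ^ 2 ∂μ := by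
  simp only [convolution_lsmul, zero_sub, hf _, smul_eq_mul, mul_neg, integral_neg, sq]

end ConvolutionAtZero

theorem integral_indicator_Icc_sq {g : ℝ → ℝ} {a b : ℝ} (hab : a ≤ b) :
    ∫ t, (Icc a b).indicator g t ^ 2 = ∫ t in a..b, g t ^ 2 := by
  have hsq : (fun t => (Icc a b).indicator g t ^ 2) = (Icc a b).indicator fun t => g t ^ 2 :=
    (indicator_comp_of_zero (g := fun y : ℝ => y ^ 2) (zero_pow two_ne_zero)).symm
  rw [hsq, integral_indicator measurableSet_Icc, integral_Icc_eq_integral_Ioc,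
    intervalIntegral.integral_of_le hab]

theorem raisedCos_eq_indicator :
    raisedCos = (Icc (-(1/2)) (1/2)).indicator fun x => 1 + cos (2 * π * x) := by
  ext x
  simp only [raisedCos, indicator_apply, mem_Icc, abs_le]

theorem even_raisedCos : raisedCos.Even := fun x => by
  simp only [raisedCos, abs_neg, mul_neg, cos_neg]

theorem cos_sin_two_pi_mul_of_mem_frontier {x : ℝ} (hx : x ∈ frontier (Icc (-(1/2) : ℝ) (1/2))) :
    cos (2 * π * x) = -1 ∧ sin (2 * π * x) = 0 := by
  rw [frontier_Icc (by norm_num)] at hx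
  rcases hx with rfl | rfl
  · rw [show 2 * π * (-(1/2)) = -π by ring, cos_neg, sin_neg, cos_pi, sin_pi, neg_zero]
    exact ⟨rfl, rfl⟩
  · rw [show 2 * π * (1/2) = π by ring, cos_pi, sin_pi]
    exact ⟨rfl, rfl⟩

theorem hasDerivAt_raisedCos (x : ℝ) :
    HasDerivAt raisedCos
      ((Icc (-(1/2)) (1/2)).indicator (fun x => -(2 * π * sin (2 * π * x))) x) x := by
  have hg : HasDerivAt (fun x => 1 + cos (2 * π * x)) (-(2 * π * sin (2 * π * x))) x := by
    refine ((((hasDerivAt_id' x).const_mul (2 * π)).cos).const_add 1).congr_deriv ?_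
    ring
  rw [raisedCos_eq_indicator]
  refine hg.indicator fun hx => ?_
  obtain ⟨hcos, hsin⟩ := cos_sin_two_pi_mul_of_mem_frontier hx
  simp only [hcos, hsin]
  norm_num

theorem deriv_raisedCos :
    deriv raisedCos = (Icc (-(1/2)) (1/2)).indicator fun x => -(2 * π * sin (2 * π * x)) :=
  funext fun x => (hasDerivAt_raisedCos x).deriv

theorem contDiff_raisedCos : ContDiff ℝ 1 raisedCos := by
  refine contDiff_one_iff_deriv.2 ⟨fun x => (hasDerivAt_raisedCos x).differentiableAt, ?_⟩
  rw [deriv_raisedCos]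
  refine Continuous.indicator (fun x hx => ?_) (by fun_prop)
  simp only [(cos_sin_two_pi_mul_of_mem_frontier hx).2, mul_zero, neg_zero]

theorem hasCompactSupport_raisedCos : HasCompactSupport raisedCos := by
  rw [raisedCos_eq_indicator]
  exact HasCompactSupport.intro isCompact_Icc fun _ hx => indicator_of_notMem hx _

theorem integral_raisedCos_sq : ∫ t, raisedCos t ^ 2 = 3 / 2 := by
  have h : ∀ u : ℝ, (1 + cos u) ^ 2 = 1 + 2 * cos u + cos u ^ 2 := fun u => by ring
  rw [raisedCos_eq_indicator, integral_indicator_Icc_sq (by norm_num),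
    intervalIntegral.integral_comp_mul_left (fun u => (1 + cos u) ^ 2) (by positivity),
    show 2 * π * (-(1/2)) = -π by ring, show 2 * π * (1/2) = π by ring]
  simp only [h]
  rw [intervalIntegral.integral_add, intervalIntegral.integral_add] <;>
    try (apply Continuous.intervalIntegrable; fun_prop)
  simp only [intervalIntegral.integral_const, intervalIntegral.integral_const_mul, integral_cos,
    integral_cos_sq, sin_neg, sin_pi, cos_neg, cos_pi, smul_eq_mul]
  field_simp
  ring

theorem integral_deriv_raisedCos_sq : ∫ t, deriv raisedCos t ^ 2 = 2 * π ^ 2 := by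
  rw [deriv_raisedCos, integral_indicator_Icc_sq (by norm_num)]
  simp only [neg_sq]
  rw [intervalIntegral.integral_comp_mul_left (fun u => (2 * π * sin u) ^ 2) (by positivity),
    show 2 * π * (-(1/2)) = -π by ring, show 2 * π * (1/2) = π by ring]
  simp only [mul_pow, intervalIntegral.integral_const_mul, integral_sin_sq, sin_neg, sin_pi,
    smul_eq_mul]
  field_simp
  ring

theorem raisedCosConv_zero : raisedCosConv 0 = 3 / 2 := by
  rw [raisedCosConv, even_raisedCos.convolution_self_zero, integral_raisedCos_sq]

theorem deriv_deriv_raisedCosConv_zero : deriv (deriv raisedCosConv) 0 = -(2 * π ^ 2) := by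
  rw [raisedCosConv, hasCompactSupport_raisedCos.deriv_deriv_convolution _ contDiff_raisedCos
    hasCompactSupport_raisedCos contDiff_raisedCos, even_raisedCos.deriv.convolution_self_zero,
    integral_deriv_raisedCos_sq]

/-- For `τ > 0`, `ψ_τ(0) = 2π²(2 + 3τ)/√(1+τ)`; in particular `ψ_τ(0) > 0`. -/
theorem psiAdm_at_zero (τ : ℝ) (hτ : 0 < τ) :
    psiAdm τ 0 = 2 * π ^ 2 * (2 + 3 * τ) / Real.sqrt (1 + τ) ∧ 0 < psiAdm τ 0 := by
  have hψ : psiAdm τ 0 = 2 * π ^ 2 * (2 + 3 * τ) / Real.sqrt (1 + τ) := by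
    rw [psiAdm, zero_div, raisedCosConv_zero, deriv_deriv_raisedCosConv_zero]
    ring
  refine ⟨hψ, hψ ▸ ?_⟩
  have : 0 < Real.sqrt (1 + τ) := Real.sqrt_pos.2 (by linarith)
  positivity
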